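/- arXiv:1705.09363 — 3 statements merged into one kernel-verified Lean document; each statement's English description precedes it below -/
import Mathlib

section
/- Let D : I → C be a diagram in a category with symbols such that for all (i,x),(j,x) ∈ Sym(D) with the same symbol x there exist (k,y) ∈ Sym(D) and arrows m : k → i, n : k → j in I with |D(m)|(y) = |D(n)|(y) = x. Then D is name-clash-free: for distinct equivalence classes X, Y of ∼_D, the name sets Nam(X) = {x | (i,x) ∈ X} and Nam(Y) are disjoint. -/
open CategoryTheory

universe w v u v' u'

/-- A category with symbols, where the symbol functor `|−| : C → Set` is valued in
subsets of a fixed universe `U` of names (so that symbols of different objects can be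
compared). -/
structure SymbolsOn (C : Type u) [Category.{v} C] (U : Type w) where
  sob : C → Set U
  smap : ∀ {A B : C}, (A ⟶ B) → (sob A → sob B)
  smap_id : ∀ (A : C) (x : sob A), smap (𝟙 A) x = x
  smap_comp : ∀ {A B B' : C} (f : A ⟶ B) (g : B ⟶ B') (x : sob A),
    smap (f ≫ g) x = smap g (smap f x)

variable {I : Type u'} [Category.{v'} I] {C : Type u} [Category.{v} C] {U : Type w}

/-- `Sym(D)`: pairs `(i, x)` with `x ∈ |D(i)|`. -/
def SymOf (S : SymbolsOn C U) (D : I ⥤ C) : Type _ :=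
  {p : I × U // p.2 ∈ S.sob (D.obj p.1)}

/-- The relation `≤_D`: `(i, x) ≤_D (j, |D(m)|(x))` for arrows `m : i ⟶ j`.
The equivalence relation `∼_D` is the one generated by it, i.e. the quotient
`Sym(D)/∼_D` is `Quot (relOf S D)`. -/
def relOf (S : SymbolsOn C U) (D : I ⥤ C) (p q : SymOf S D) : Prop :=
  ∃ m : p.1.1 ⟶ q.1.1, (S.smap (D.map m) ⟨p.1.2, p.2⟩ : U) = q.1.2

/-- The name set `Nam(X) = {x | (i,x) ∈ X}` of an equivalence class `X ∈ Sym(D)/∼_D`. -/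
def NamOf (S : SymbolsOn C U) (D : I ⥤ C) (X : Quot (relOf S D)) : Set U :=
  {n | ∃ p : SymOf S D, Quot.mk (relOf S D) p = X ∧ p.1.2 = n}

/-- If any two occurrences `(i,x)`, `(j,x)` of the same symbol `x` in `Sym(D)` have a
common origin `(k,y)` mapping onto both, then `D` is name-clash-free: the name sets of
distinct equivalence classes of `∼_D` are disjoint. -/
theorem nameClashFree_of_commonOrigin (S : SymbolsOn C U) (D : I ⥤ C)
    (h : ∀ p q : SymOf S D, p.1.2 = q.1.2 →
      ∃ (k : I) (y : S.sob (D.obj k)) (m : k ⟶ p.1.1) (n : k ⟶ q.1.1),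
        (S.smap (D.map m) y : U) = p.1.2 ∧ (S.smap (D.map n) y : U) = q.1.2) :
    ∀ X Y : Quot (relOf S D), X ≠ Y → Disjoint (NamOf S D X) (NamOf S D Y) := by
  intro X Y hXY
  rw [Set.disjoint_left]
  rintro n ⟨p, hp, hpn⟩ ⟨q, hq, hqn⟩
  obtain ⟨k, y, m, m', hm, hm'⟩ := h p q (hpn.trans hqn.symm)
  apply hXY
  rw [← hp, ← hq]
  have r : SymOf S D := ⟨(k, (y : U)), y.2⟩
  have h1 : Quot.mk (relOf S D) (⟨(k, (y : U)), y.2⟩ : SymOf S D) = Quot.mk _ p :=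
    Quot.sound ⟨m, by simpa using hm⟩
  have h2 : Quot.mk (relOf S D) (⟨(k, (y : U)), y.2⟩ : SymOf S D) = Quot.mk _ q :=
    Quot.sound ⟨m', by simpa using hm'⟩
  rw [← h1, h2]
end

section
/- Let D : I → C be a diagram and i a colimit node of D (i.e., every object of I has at most one arrow into i, and D(i) together with the morphisms D(m) for arrows m into i is a colimit of the restricted diagram D^{→i}). Then the diagrams D and D∖i (D with node i removed) have the same colimits: every colimit of D restricts to a colimit of D∖i by forgetting the injection from D(i), and every colimit of D∖i extends uniquely to a colimit of D. -/
open CategoryTheory CategoryTheory.Limits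

universe v u v' u'

variable {I : Type u'} [Category.{v'} I] {C : Type u} [Category.{v} C]

/-- The inclusion of the full subcategory `I∖i` (all objects other than `i`). -/
def inclWithout (i : I) : ObjectProperty.FullSubcategory (fun j : I => j ≠ i) ⥤ I :=
  ObjectProperty.ι _

/-- The inclusion of the full subcategory `I^{→i}` (objects `j ≠ i` with an arrow into `i`). -/
def inclInto (i : I) : ObjectProperty.FullSubcategory (fun j : I => j ≠ i ∧ Nonempty (j ⟶ i)) ⥤ I :=
  ObjectProperty.ι _

/-- The cocone on `D^{→i}` with point `D(i)` whose legs are `D(m)` for the (unique)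
arrows `m` into `i`. -/
noncomputable def coconeInto (D : I ⥤ C) (i : I)
    (hu : ∀ j : I, Subsingleton (j ⟶ i)) :
    Cocone (inclInto i ⋙ D) where
  pt := D.obj i
  ι :=
    { app := fun j => D.map j.property.2.some
      naturality := by
        intro j j' f
        have := hu j.obj
        simp only [Functor.comp_map, Functor.const_obj_obj, Functor.const_obj_map,
          Category.comp_id]
        refine (D.map_comp _ _).symm.trans ?_
        congr 1
        exact Subsingleton.elim _ _ }

/-! Every object has at most one arrow into `i`, so a cocone on `D` restricts along
`I^{→i} ⥤ I∖i` to the cocone on `D^{→i}` formed by its legs at the `j → i`; as `D(i)` is the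
colimit of `D^{→i}`, the leg at `i` is forced to be the induced map. Hence whiskering along
`I∖i ⥤ I` is injective on cocones and an equivalence `Cocone D ≌ Cocone (D∖i)`, the inverse
adjoining that induced map as the leg at `i`; equivalences of cocone categories preserve and
reflect colimits. -/

namespace ColimitNode

variable {D : I ⥤ C} {i : I} {hu : ∀ j : I, Subsingleton (j ⟶ i)}

lemma coconeInto_ι_app
    (j : ObjectProperty.FullSubcategory (fun j : I => j ≠ i ∧ Nonempty (j ⟶ i))) (m : j.obj ⟶ i) :
    (coconeInto D i hu).ι.app j = D.map m :=
  congrArg D.map (@Subsingleton.elim _ (hu j.obj) _ _)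

lemma hom_ext (hc : IsColimit (coconeInto D i hu)) {X : C} {f g : D.obj i ⟶ X}
    (h : ∀ j (_ : j ≠ i) (m : j ⟶ i), D.map m ≫ f = D.map m ≫ g) : f = g :=
  hc.hom_ext fun ⟨j, hj, ⟨m⟩⟩ => by rw [coconeInto_ι_app ⟨j, hj, ⟨m⟩⟩ m]; exact h j hj m

lemma ι_app_self_comp_eq (hc : IsColimit (coconeInto D i hu)) {c c₂ : Cocone D}
    (f : c.pt ⟶ c₂.pt) (h : ∀ j, j ≠ i → c.ι.app j ≫ f = c₂.ι.app j) :
    c.ι.app i ≫ f = c₂.ι.app i :=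
  hom_ext hc fun j hj m => by rw [c.w_assoc, c₂.w, h j hj]

lemma whisker_injective (hc : IsColimit (coconeInto D i hu)) :
    Function.Injective fun c : Cocone D => c.whisker (inclWithout i) := by
  rintro ⟨p, ι⟩ ⟨p₂, ι₂⟩ h
  obtain ⟨rfl, h⟩ := Cocone.mk.inj h
  have hne : ∀ j, j ≠ i → ι.app j = ι₂.app j := fun j hj =>
    congrArg (fun τ => NatTrans.app τ ⟨j, hj⟩) (eq_of_heq h)
  congr
  ext j
  by_cases hj : j = i
  · subst hj
    simpa using
      ι_app_self_comp_eq hc (c := ⟨p, ι⟩) (c₂ := ⟨p, ι₂⟩) (𝟙 p) (by simpa using hne)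
  · exact hne j hj

section extend

variable (hc : IsColimit (coconeInto D i hu)) (c' : Cocone (inclWithout i ⋙ D))

def restrictToInto : Cocone (inclInto i ⋙ D) :=
  c'.whisker (ObjectProperty.ιOfLE fun _ hj => hj.1)

lemma map_comp_ι_app_of_ne {j k : I} (hj : j ≠ i) (hk : k ≠ i) (f : j ⟶ k) :
    D.map f ≫ c'.ι.app ⟨k, hk⟩ = c'.ι.app ⟨j, hj⟩ :=
  c'.w (ObjectProperty.homMk f : (⟨j, hj⟩ : ObjectProperty.FullSubcategory _) ⟶ ⟨k, hk⟩)

open Classical in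
noncomputable def extendLeg (j : I) : D.obj j ⟶ c'.pt :=
  if h : j = i then eqToHom (congrArg D.obj h) ≫ hc.desc (restrictToInto c')
  else c'.ι.app ⟨j, h⟩

lemma extendLeg_self : extendLeg hc c' i = hc.desc (restrictToInto c') :=
  (dif_pos rfl).trans (Category.id_comp _)

lemma extendLeg_of_ne {j : I} (hj : j ≠ i) : extendLeg hc c' j = c'.ι.app ⟨j, hj⟩ :=
  dif_neg hj

lemma map_comp_extendLeg_self {j : I} (m : j ⟶ i) :
    D.map m ≫ extendLeg hc c' i = extendLeg hc c' j := by
  by_cases hj : j = i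
  · subst hj
    rw [Subsingleton.elim m (𝟙 j), D.map_id, Category.id_comp]
  · rw [extendLeg_self, extendLeg_of_ne hc c' hj, ← coconeInto_ι_app ⟨j, hj, ⟨m⟩⟩ m]
    exact hc.fac (restrictToInto c') ⟨j, hj, ⟨m⟩⟩

lemma map_comp_extendLeg_of_ne {j k : I} (hk : k ≠ i) (f : j ⟶ k) :
    D.map f ≫ extendLeg hc c' k = extendLeg hc c' j := by
  by_cases hj : j = i
  · subst hj
    refine hom_ext hc fun l hl m => ?_
    rw [map_comp_extendLeg_self, extendLeg_of_ne hc c' hl, ← D.map_comp_assoc,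
      extendLeg_of_ne hc c' hk, map_comp_ι_app_of_ne c' hl hk]
  · rw [extendLeg_of_ne hc c' hk, extendLeg_of_ne hc c' hj, map_comp_ι_app_of_ne c' hj hk]

noncomputable def extendCocone : Cocone D where
  pt := c'.pt
  ι.app := extendLeg hc c'
  ι.naturality j k f := by
    by_cases hk : k = i
    · subst hk
      simpa using map_comp_extendLeg_self hc c' f
    · simpa using map_comp_extendLeg_of_ne hc c' hk f

lemma whisker_extendCocone : (extendCocone hc c').whisker (inclWithout i) = c' := by
  obtain ⟨p, ι⟩ := c'
  show Cocone.mk p _ = Cocone.mk p ι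
  congr
  ext ⟨j, hj⟩
  exact extendLeg_of_ne hc _ hj

end extend

lemma isEquivalence_whiskering (hc : IsColimit (coconeInto D i hu)) :
    (Cocone.whiskering (inclWithout i) : Cocone D ⥤ _).IsEquivalence where
  faithful := ⟨fun {_ _ f g} h => CoconeMorphism.ext f g (congrArg CoconeMorphism.hom h :)⟩
  full := ⟨fun f => ⟨⟨f.hom, fun j => by
    by_cases hj : j = i
    · subst hj
      exact ι_app_self_comp_eq hc f.hom fun k hk => f.w ⟨k, hk⟩
    · exact f.w ⟨j, hj⟩⟩, rfl⟩⟩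
  essSurj := ⟨fun c' => ⟨extendCocone hc c', ⟨eqToIso (whisker_extendCocone hc c')⟩⟩⟩

noncomputable def whiskeringEquivalence (hc : IsColimit (coconeInto D i hu)) :
    Cocone D ≌ Cocone (inclWithout i ⋙ D) :=
  haveI := isEquivalence_whiskering hc
  (Cocone.whiskering (inclWithout i)).asEquivalence

end ColimitNode

/-- If `i` is a colimit node of `D` (every object has at most one arrow into `i`, and
`D(i)` with the maps `D(m)` is a colimit of `D^{→i}`), then `D` and `D∖i` have the same
colimits: every colimit of `D` restricts (by forgetting the injection from `D(i)`) to a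
colimit of `D∖i`, and every colimit of `D∖i` extends uniquely to a cocone on `D`, which
is a colimit. -/
theorem colimitNode_removal (D : I ⥤ C) (i : I)
    (hu : ∀ j : I, Subsingleton (j ⟶ i))
    (hc : IsColimit (coconeInto D i hu)) :
    (∀ c : Cocone D, Nonempty (IsColimit c) →
        Nonempty (IsColimit (c.whisker (inclWithout i)))) ∧
      (∀ c' : Cocone (inclWithout i ⋙ D), IsColimit c' →
        ∃ c : Cocone D, c.whisker (inclWithout i) = c' ∧ Nonempty (IsColimit c) ∧
          ∀ c₂ : Cocone D, c₂.whisker (inclWithout i) = c' → c₂ = c) := by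
  have transfer (c : Cocone D) : IsColimit (c.whisker (inclWithout i)) ≃ IsColimit c :=
    IsColimit.ofCoconeEquiv (ColimitNode.whiskeringEquivalence hc)
  refine ⟨fun c ⟨hc₁⟩ => ⟨(transfer c).symm hc₁⟩, fun c' hc' => ?_⟩
  have hext := ColimitNode.whisker_extendCocone hc c'
  refine ⟨ColimitNode.extendCocone hc c', hext,
    ⟨transfer _ (hc'.ofIsoColimit (eqToIso hext.symm))⟩, fun c₂ h₂ => ?_⟩
  exact ColimitNode.whisker_injective hc (h₂.trans hext.symm)
end

section
/- Let (D : I → Vocab, L) be a labeled diagram (L assigns to each node a name or the empty list) that is name-clash-free in the labeled sense. Then the set sel(D,L) := { Nam(X) | X ∈ Sym(D,L)/∼_{DL} } is a vocabulary (its elements are pairwise disjoint sets of qualified names), the maps μ_i : D(i) → sel(D,L) given by μ_i([x]_{D(i)}) = [L(i)/x]_{sel(D,L)} are well-defined functions, and (sel(D,L), (μ_i)) is a colimit cocone of D in Vocab. -/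
open CategoryTheory CategoryTheory.Limits

/-- A vocabulary: a set of pairwise disjoint nonempty structured symbols (sets of
qualified names). -/
def IsVocab {Name : Type} (V : Set (Set (List Name))) : Prop :=
  (∀ S ∈ V, S.Nonempty) ∧ V.PairwiseDisjoint id

/-- The type of vocabularies over `Name`. -/
abbrev Voc (Name : Type) : Type := {V : Set (Set (List Name)) // IsVocab V}

/-- The category `Vocab`: the full subcategory of `Set` on the vocabularies. -/
abbrev VocCat (Name : Type) : Type :=
  InducedCategory (Type) (fun V : Voc Name => ↥V.1)

variable {Name : Type} {I : Type} [Category.{0} I]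

/-- The symbols of a labeled diagram `(D, L)`:
pairs `(i, L(i)/x)` with `x ∈ dom(D(i))`. -/
def LSym (D : I ⥤ VocCat Name) (L : I → List Name) : Type :=
  {p : I × List Name // ∃ (x : List Name) (S : Set (List Name)),
    S ∈ (D.obj p.1).1 ∧ x ∈ S ∧ p.2 = L p.1 ++ x}

/-- The relation `≤_{DL}` on the symbols of a labeled diagram:
`(i, L(i)/x) ≤_{DL} (j, L(j)/y)` if for some `m : i ⟶ j`, `D(m)(S) = T` with
`x ∈ S ∈ D(i)` and `y ∈ T ∈ D(j)`. The equivalence relation `∼_{DL}` is the one it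
generates, so `Sym(D,L)/∼_{DL}` is `Quot (LRel D L)`. -/
def LRel (D : I ⥤ VocCat Name) (L : I → List Name) (p q : LSym D L) : Prop :=
  ∃ (m : p.1.1 ⟶ q.1.1) (S : Set (List Name)) (hS : S ∈ (D.obj p.1.1).1)
    (x : List Name), x ∈ S ∧ p.1.2 = L p.1.1 ++ x ∧
      ∃ y : List Name, y ∈ (D.map m ⟨S, hS⟩ : Set (List Name)) ∧ q.1.2 = L q.1.1 ++ y

/-- The name set `Nam(X) = {q | (i,q) ∈ X}` of a class `X ∈ Sym(D,L)/∼_{DL}`. -/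
def LNam (D : I ⥤ VocCat Name) (L : I → List Name) (X : Quot (LRel D L)) :
    Set (List Name) :=
  {n | ∃ p : LSym D L, Quot.mk (LRel D L) p = X ∧ p.1.2 = n}

/-- The selected colimit vocabulary `sel(D,L) = { Nam(X) | X ∈ Sym(D,L)/∼_{DL} }`. -/
def LSel (D : I ⥤ VocCat Name) (L : I → List Name) : Set (Set (List Name)) :=
  Set.range (LNam D L)

/-! Sending a symbol `(i, L(i)/x)` to the structured symbol `[x]_{D(i)}` identifies
`Sym(D,L)/∼_{DL}` with the colimit `(Σ i, D(i))/∼` of the underlying diagram of sets, because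
`≤_{DL}` is exactly its generating relation `(i, s) ∼ (j, D(m) s)`. Name-clash-freeness makes
`X ↦ Nam(X)` injective, so `sel(D,L)` is a bijective image of that colimit: it is a vocabulary
and, `Vocab` being a full subcategory of `Set`, the colimit of `D` in `Vocab`. -/

lemma IsVocab.eq_of_mem {V : Set (Set (List Name))} (hV : IsVocab V)
    {S T : Set (List Name)} (hS : S ∈ V) (hT : T ∈ V) {x : List Name} (hxS : x ∈ S)
    (hxT : x ∈ T) : S = T :=
  hV.2.elim hS hT (Set.not_disjoint_iff.mpr ⟨x, hxS, hxT⟩)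

namespace LSym

variable (D : I ⥤ VocCat Name) (L : I → List Name)

def ofMem (i : I) {S : Set (List Name)} (hS : S ∈ (D.obj i).1) {x : List Name}
    (hx : x ∈ S) : LSym D L :=
  ⟨(i, L i ++ x), x, S, hS, hx, rfl⟩

lemma mk_ofMem_eq_mk_ofMem {i : I} {S : Set (List Name)} (hS : S ∈ (D.obj i).1)
    {x y : List Name} (hx : x ∈ S) (hy : y ∈ S) :
    Quot.mk (LRel D L) (ofMem D L i hS hx) = Quot.mk (LRel D L) (ofMem D L i hS hy) :=
  Quot.sound ⟨𝟙 i, S, hS, x, hx, rfl, y, (congrArg Subtype.val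
    (ConcreteCategory.congr_hom (D.map_id i) ⟨S, hS⟩)).symm ▸ hy, rfl⟩

/-- The symbol `(i, L(i)/x)` chosen for a structured symbol `[x] ∈ D(i)`. -/
noncomputable def ofElem (a : Σ i, ↥(D.obj i).1) : LSym D L :=
  ofMem D L a.1 a.2.2 ((D.obj a.1).2.1 _ a.2.2).choose_spec

variable {D L}

/-- The structured symbol `[x]_{D(i)}` of a symbol `(i, L(i)/x)`. -/
noncomputable def elem (p : LSym D L) : Σ i, ↥(D.obj i).1 :=
  ⟨p.1.1, p.2.choose_spec.choose, p.2.choose_spec.choose_spec.1⟩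

lemma elem_ofMem {i : I} {S : Set (List Name)} (hS : S ∈ (D.obj i).1) {x : List Name}
    (hx : x ∈ S) : (ofMem D L i hS hx).elem = ⟨i, S, hS⟩ := by
  obtain ⟨hS', hxS', hx'⟩ := (ofMem D L i hS hx).2.choose_spec.choose_spec
  exact Sigma.ext rfl (heq_of_eq (Subtype.ext
    ((D.obj i).2.eq_of_mem hS' hS hxS' (List.append_cancel_left hx' ▸ hx))))

lemma elem_ofElem (a : Σ i, ↥(D.obj i).1) : (ofElem D L a).elem = a :=
  elem_ofMem _ _

lemma mk_ofElem_elem (p : LSym D L) :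
    Quot.mk (LRel D L) (ofElem D L p.elem) = Quot.mk (LRel D L) p := by
  obtain ⟨⟨i, _⟩, x, S, hS, hx, ha⟩ := p
  dsimp only at hS ha
  subst ha
  change Quot.mk _ (ofElem D L (ofMem D L i hS hx).elem) = Quot.mk _ (ofMem D L i hS hx)
  rw [elem_ofMem]
  exact mk_ofMem_eq_mk_ofMem D L hS _ hx

end LSym

section Colimit

variable {D : I ⥤ VocCat Name} {L : I → List Name}

lemma LRel.colimitTypeRel_elem {p q : LSym D L} (h : LRel D L p q) :
    (D ⋙ inducedFunctor _).ColimitTypeRel p.elem q.elem := by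
  obtain ⟨m, S, hS, x, hx, hp, y, hy, hq⟩ := h
  obtain ⟨⟨i, _⟩, _⟩ := p
  obtain ⟨⟨j, _⟩, _⟩ := q
  dsimp only at m hS hp hq
  subst hp hq
  change (D ⋙ inducedFunctor _).ColimitTypeRel (LSym.ofMem D L i hS hx).elem
    (LSym.ofMem D L j (D.map m ⟨S, hS⟩).2 hy).elem
  rw [LSym.elem_ofMem, LSym.elem_ofMem]
  exact ⟨m, rfl⟩

lemma LRel.ofElem_of_colimitTypeRel {a b : Σ i, ↥(D.obj i).1}
    (h : (D ⋙ inducedFunctor _).ColimitTypeRel a b) :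
    LRel D L (LSym.ofElem D L a) (LSym.ofElem D L b) := by
  obtain ⟨m, hb⟩ := h
  obtain ⟨j, t⟩ := b
  dsimp only at m hb
  rw [hb]
  exact ⟨m, _, a.2.2, _, ((D.obj a.1).2.1 _ a.2.2).choose_spec, rfl, _,
    ((D.obj j).2.1 _ (D.map m a.2).2).choose_spec, rfl⟩

variable (D L)

noncomputable def lQuotEquivColimitType :
    Quot (LRel D L) ≃ (D ⋙ inducedFunctor _).ColimitType where
  toFun := Quot.map LSym.elem fun _ _ => LRel.colimitTypeRel_elem
  invFun := Quot.map (LSym.ofElem D L) fun _ _ => LRel.ofElem_of_colimitTypeRel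
  left_inv := Quot.ind fun p => p.mk_ofElem_elem
  right_inv := Quot.ind fun a => congrArg (Quot.mk _) (LSym.elem_ofElem a)

lemma lNam_nonempty (X : Quot (LRel D L)) : (LNam D L X).Nonempty := by
  obtain ⟨p, rfl⟩ := Quot.exists_rep X
  exact ⟨p.1.2, p, rfl, rfl⟩

variable {D L}
variable (hncf : ∀ X Y : Quot (LRel D L), X ≠ Y → Disjoint (LNam D L X) (LNam D L Y))
include hncf

lemma lNam_injective : Function.Injective (LNam D L) := by
  intro X Y h
  by_contra hne
  obtain ⟨n, hn⟩ := lNam_nonempty D L X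
  exact Set.disjoint_left.mp (hncf X Y hne) hn (h ▸ hn)

lemma isVocab_lSel : IsVocab (LSel D L) := by
  refine ⟨Set.forall_mem_range.mpr (lNam_nonempty D L), ?_⟩
  rintro _ ⟨X, rfl⟩ _ ⟨Y, rfl⟩ hne
  exact hncf X Y (ne_of_apply_ne _ hne)

noncomputable def lQuotEquivLSel : Quot (LRel D L) ≃ LSel D L :=
  Equiv.ofBijective _ (Set.rangeFactorization_bijective.mpr (lNam_injective hncf))

/-- The cocone `(sel(D,L), (μ_i))`. -/
noncomputable def lCocone : Cocone D where
  pt := ⟨LSel D L, isVocab_lSel hncf⟩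
  ι :=
    { app i := InducedCategory.homMk (TypeCat.ofHom fun s =>
        lQuotEquivLSel hncf (Quot.mk _ (LSym.ofElem D L ⟨i, s⟩)))
      naturality _ _ m := ConcreteCategory.hom_ext _ _ fun _ =>
        congrArg (lQuotEquivLSel hncf)
          (Quot.sound (LRel.ofElem_of_colimitTypeRel ⟨m, rfl⟩)).symm }

lemma lCocone_ι_app (i : I) {S : Set (List Name)} (hS : S ∈ (D.obj i).1) {x : List Name}
    (hx : x ∈ S) :
    ((lCocone hncf).ι.app i ⟨S, hS⟩ : Set (List Name)) =
      LNam D L (Quot.mk (LRel D L) (LSym.ofMem D L i hS hx)) :=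
  congrArg (LNam D L) (LSym.mk_ofMem_eq_mk_ofMem D L hS _ hx)

noncomputable def lCoconeIsColimit : IsColimit (lCocone hncf) := by
  refine isColimitOfReflects (inducedFunctor _)
    ((Types.isColimit_iff_coconeTypesIsColimit _).mpr ?_).some
  refine (D ⋙ inducedFunctor _).isColimit_coconeTypes.of_equiv
    ((lQuotEquivColimitType D L).symm.trans (lQuotEquivLSel hncf)) fun _ _ => rfl

end Colimit

theorem labeled_colimit_of_vocabularies_general (D : I ⥤ VocCat Name) (L : I → List Name)
    (hncf : ∀ X Y : Quot (LRel D L), X ≠ Y → Disjoint (LNam D L X) (LNam D L Y)) :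
    IsVocab (LSel D L) ∧
      (∀ (i : I) (S : Set (List Name)) (hS : S ∈ (D.obj i).1) (x y : List Name)
        (hx : x ∈ S) (hy : y ∈ S),
        LNam D L (Quot.mk (LRel D L) ⟨(i, L i ++ x), ⟨x, S, hS, hx, rfl⟩⟩) =
          LNam D L (Quot.mk (LRel D L) ⟨(i, L i ++ y), ⟨y, S, hS, hy, rfl⟩⟩)) ∧
      (∃ c : Cocone D, c.pt.1 = LSel D L ∧
        (∀ (i : I) (S : Set (List Name)) (hS : S ∈ (D.obj i).1) (x : List Name)
          (hx : x ∈ S),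
          (c.ι.app i ⟨S, hS⟩ : Set (List Name)) =
            LNam D L (Quot.mk (LRel D L) ⟨(i, L i ++ x), ⟨x, S, hS, hx, rfl⟩⟩)) ∧
        Nonempty (IsColimit c)) :=
  ⟨isVocab_lSel hncf,
    fun _ _ hS _ _ hx hy => congrArg (LNam D L) (LSym.mk_ofMem_eq_mk_ofMem D L hS hx hy),
    lCocone hncf, rfl, fun i _ hS _ hx => lCocone_ι_app hncf i hS hx,
    ⟨lCoconeIsColimit hncf⟩⟩

/-- For a name-clash-free labeled diagram `(D, L)` over `Vocab`:
`sel(D,L) = { Nam(X) | X ∈ Sym(D,L)/∼_{DL} }` is a vocabulary; the maps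
`μ_i : D(i) → sel(D,L)`, `μ_i([x]) = [L(i)/x]`, are well-defined; and they
form a colimit cocone of `D` in `Vocab`. -/
theorem labeled_colimit_of_vocabularies (D : I ⥤ VocCat Name) (L : I → List Name)
    (hL : ∀ i, (L i).length ≤ 1)
    (hncf : ∀ X Y : Quot (LRel D L), X ≠ Y → Disjoint (LNam D L X) (LNam D L Y)) :
    IsVocab (LSel D L) ∧
      (∀ (i : I) (S : Set (List Name)) (hS : S ∈ (D.obj i).1) (x y : List Name)
        (hx : x ∈ S) (hy : y ∈ S),
        LNam D L (Quot.mk (LRel D L) ⟨(i, L i ++ x), ⟨x, S, hS, hx, rfl⟩⟩) =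
          LNam D L (Quot.mk (LRel D L) ⟨(i, L i ++ y), ⟨y, S, hS, hy, rfl⟩⟩)) ∧
      (∃ c : Cocone D, c.pt.1 = LSel D L ∧
        (∀ (i : I) (S : Set (List Name)) (hS : S ∈ (D.obj i).1) (x : List Name)
          (hx : x ∈ S),
          (c.ι.app i ⟨S, hS⟩ : Set (List Name)) =
            LNam D L (Quot.mk (LRel D L) ⟨(i, L i ++ x), ⟨x, S, hS, hx, rfl⟩⟩)) ∧
        Nonempty (IsColimit c)) :=
  labeled_colimit_of_vocabularies_general D L hncf
end
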